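/- Let a ∈ ℝ^N be a fixed nonzero vector, let P = P(a) be the M×M autocorrelation Toeplitz matrix of a, and let y ∈ ℝ^M be a zero-mean Gaussian random vector with covariance matrix P. Then for every ε ∈ (0,1), P( ‖y‖₂² ≤ M‖a‖₂² (1−ε) ) ≤ exp( − ε² M / (8 μ(a)) ). -/

import Mathlib

open MeasureTheory Matrix Real Finset

/-- Un-normalized sample autocorrelation `R_a(τ) = ∑_{i=1}^{N-τ} a_i a_{i+τ}`. -/
noncomputable def autocorr (N : ℕ) (a : Fin N → ℝ) (τ : ℕ) : ℝ :=
  ∑ i : Fin N, if h : i.1 + τ < N then a i * a ⟨i.1 + τ, h⟩ else 0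

/-- The `M × M` symmetric Toeplitz covariance matrix `P(a)` with entries `R_a(|i-j|)`. -/
noncomputable def covToeplitz (N M : ℕ) (a : Fin N → ℝ) :
    Matrix (Fin M) (Fin M) ℝ :=
  fun i j => autocorr N a (Nat.dist i.1 j.1)

/-!
Chernoff's method: for `t ≥ 0`, `ν {‖y‖² ≤ c} ≤ e^{tc} 𝔼 e^{-t‖y‖²} = e^{tc} det(1 + 2tP)^{-1/2}`,
the expectation being a Gaussian integral with precision matrix `P⁻¹ + 2t`. In the eigenbasis,
`det(1 + 2tP) = ∏ (1 + 2tλᵢ)`, and `log(1 + x) ≥ x - x²/2` for `x ≥ 0` gives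
`det(1 + 2tP) ≥ exp(2t tr P - 2t² ∑ λᵢ²)` with `tr P = M‖a‖²`. The exponent
`-tε tr P + t² ∑ λᵢ²` is minimised at `t = ε tr P / (2 ∑ λᵢ²)`.

`P` is positive definite since `P = S Sᵀ` for the matrix `S` whose rows are the shifts of `a`, and
the columns of `S` starting at the first nonzero entry `a i₀` form an upper triangular block with
diagonal `a i₀`.
-/

lemma Real.exp_sub_sq_div_two_le_one_add {x : ℝ} (hx : 0 ≤ x) : exp (x - x ^ 2 / 2) ≤ 1 + x := by
  have h : x - x ^ 2 / 2 ≤ 2 * x / (x + 2) := by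
    rw [le_div_iff₀ (by positivity)]; nlinarith [pow_nonneg hx 3]
  calc exp (x - x ^ 2 / 2) ≤ exp (log (1 + x)) :=
        exp_le_exp.2 (h.trans (le_log_one_add_of_nonneg hx))
    _ = 1 + x := exp_log (by positivity)

namespace Matrix

variable {ι : Type*} [Fintype ι] [DecidableEq ι]

lemma IsHermitian.det_one_add_smul {A : Matrix ι ι ℝ} (hA : A.IsHermitian) (s : ℝ) :
    (1 + s • A).det = ∏ i, (1 + s * hA.eigenvalues i) := by
  have : 1 + s • A = cfc (fun x => 1 + s * x) A := by
    rw [cfc_add .., cfc_const_one .., cfc_const_mul .., cfc_id' ..]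
  rw [this, hA.cfc_eq]
  simp [IsHermitian.cfc, -Unitary.conjStarAlgAut_apply]

lemma PosSemidef.exp_le_det_one_add_smul {A : Matrix ι ι ℝ} (hA : A.PosSemidef) {s : ℝ}
    (hs : 0 ≤ s) :
    exp (s * A.trace - s ^ 2 / 2 * ∑ i, hA.isHermitian.eigenvalues i ^ 2) ≤ (1 + s • A).det := by
  set e := hA.isHermitian.eigenvalues
  rw [hA.isHermitian.det_one_add_smul, hA.isHermitian.trace_eq_sum_eigenvalues]
  calc exp (s * ∑ i, (e i : ℝ) - s ^ 2 / 2 * ∑ i, e i ^ 2)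
      = ∏ i, exp (s * e i - (s * e i) ^ 2 / 2) := by
        rw [← exp_sum, sum_sub_distrib, mul_sum, mul_sum]
        simp only [mul_pow]
        congr 2; ring_nf
    _ ≤ ∏ i, (1 + s * e i) := prod_le_prod (fun _ _ => (exp_pos _).le)
        fun i _ => exp_sub_sq_div_two_le_one_add (mul_nonneg hs (hA.eigenvalues_nonneg i))

open scoped MatrixOrder in
lemma PosSemidef.exists_det_sq_eq_and_dotProduct_mulVec_eq {Q : Matrix ι ι ℝ}
    (hQ : Q.PosSemidef) :
    ∃ B : Matrix ι ι ℝ, B.det ^ 2 = Q.det ∧ ∀ v, v ⬝ᵥ Q *ᵥ v = ∑ i, (B *ᵥ v) i ^ 2 := by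
  obtain ⟨B, rfl⟩ := CStarAlgebra.nonneg_iff_eq_star_mul_self.mp hQ.nonneg
  simp only [star_eq_conjTranspose, conjTranspose_eq_transpose_of_trivial]
  refine ⟨B, by rw [det_mul, det_transpose, sq], fun v => ?_⟩
  rw [← mulVec_mulVec, dotProduct_mulVec, vecMul_transpose]
  simp only [dotProduct, sq]

lemma integrable_comp_mulVec {B : Matrix ι ι ℝ} (hB : B.det ≠ 0) {g : (ι → ℝ) → ℝ}
    (hg : Integrable g) : Integrable (fun v => g (B *ᵥ v)) := by
  have hmap := Real.map_matrix_volume_pi_eq_smul_volume_pi hB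
  have hL : Continuous (toLin' B) := LinearMap.continuous_on_pi _
  refine (integrable_map_measure ?_ hL.aemeasurable).mp ?_
  all_goals rw [hmap]
  · exact hg.aestronglyMeasurable.smul_measure _
  · exact hg.smul_measure ENNReal.ofReal_ne_top

lemma integral_comp_mulVec {B : Matrix ι ι ℝ} (hB : B.det ≠ 0) {g : (ι → ℝ) → ℝ}
    (hg : AEStronglyMeasurable g) : ∫ v, g (B *ᵥ v) = |B.det|⁻¹ * ∫ w, g w := by
  have hmap := Real.map_matrix_volume_pi_eq_smul_volume_pi hB
  have hL : Continuous (toLin' B) := LinearMap.continuous_on_pi _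
  have := integral_map hL.aemeasurable (hmap ▸ hg.smul_measure (ENNReal.ofReal |(B.det)⁻¹|))
  rw [hmap, integral_smul_measure, ENNReal.toReal_ofReal (abs_nonneg _), smul_eq_mul,
    abs_inv] at this
  exact this.symm

lemma integrable_exp_neg_half_dotProduct_mulVec {Q : Matrix ι ι ℝ} (hQ : Q.PosDef) :
    Integrable (fun v => exp (-(1 / 2) * (v ⬝ᵥ Q *ᵥ v))) := by
  obtain ⟨B, hBQ, hQB⟩ := hQ.posSemidef.exists_det_sq_eq_and_dotProduct_mulVec_eq
  have hB : B.det ≠ 0 := fun h => hQ.det_pos.ne' (by rw [← hBQ, h, sq, zero_mul])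
  simp_rw [hQB, mul_sum, exp_sum]
  exact integrable_comp_mulVec hB <|
    Integrable.fintype_prod (f := fun _ x => exp (-(1 / 2) * x ^ 2))
      fun _ => integrable_exp_neg_mul_sq (by norm_num)

lemma integral_exp_neg_half_dotProduct_mulVec {Q : Matrix ι ι ℝ} (hQ : Q.PosDef) :
    ∫ v, exp (-(1 / 2) * (v ⬝ᵥ Q *ᵥ v)) = √((2 * π) ^ Fintype.card ι / Q.det) := by
  obtain ⟨B, hBQ, hQB⟩ := hQ.posSemidef.exists_det_sq_eq_and_dotProduct_mulVec_eq
  have hB : B.det ≠ 0 := fun h => hQ.det_pos.ne' (by rw [← hBQ, h, sq, zero_mul])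
  simp_rw [hQB, mul_sum, exp_sum]
  rw [integral_comp_mulVec (g := fun w => ∏ i, exp (-(1 / 2) * w i ^ 2)) hB
    (by fun_prop : Continuous _).aestronglyMeasurable,
    integral_fintype_prod_volume_eq_pow (fun x => exp (-(1 / 2) * x ^ 2)), integral_gaussian,
    ← hBQ, sqrt_div' _ (sq_nonneg _), sqrt_sq_eq_abs, div_eq_inv_mul (√_)]
  congr 1
  rw [eq_comm, sqrt_eq_iff_eq_sq (by positivity) (by positivity), pow_right_comm,
    sq_sqrt (by positivity), div_div_eq_mul_div, div_one, mul_comm]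

end Matrix

section GaussianTail

variable {ι : Type*} [Fintype ι] [DecidableEq ι]

noncomputable def gaussianPDF (P : Matrix ι ι ℝ) (v : ι → ℝ) : ℝ :=
  (√((2 * π) ^ Fintype.card ι * P.det))⁻¹ * exp (-(1 / 2) * (v ⬝ᵥ P⁻¹ *ᵥ v))

lemma withDensity_gaussianPDF_sum_sq_le_le_div_sqrt_det {P : Matrix ι ι ℝ} (hP : P.PosDef)
    {t : ℝ} (ht : 0 ≤ t) (c : ℝ) :
    volume.withDensity (fun v => ENNReal.ofReal (gaussianPDF P v)) {v | ∑ k, v k ^ 2 ≤ c} ≤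
      ENNReal.ofReal (exp (t * c) / √(1 + (2 * t) • P).det) := by
  set A := P⁻¹ + (2 * t) • (1 : Matrix ι ι ℝ)
  have hA : A.PosDef := hP.inv.add_posSemidef (PosSemidef.one.smul (by positivity))
  set K := (√((2 * π) ^ Fintype.card ι * P.det))⁻¹ * exp (t * c) with hK
  have hdom : ∀ v ∈ {v : ι → ℝ | ∑ k, v k ^ 2 ≤ c},
      gaussianPDF P v ≤ K * exp (-(1 / 2) * (v ⬝ᵥ A *ᵥ v)) := by
    intro v hv
    have hA_v : v ⬝ᵥ A *ᵥ v = v ⬝ᵥ P⁻¹ *ᵥ v + 2 * t * ∑ k, v k ^ 2 := by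
      simp [A, add_mulVec, smul_mulVec, dotProduct, sq, mul_sum, mul_add, sum_add_distrib,
        mul_left_comm]
    rw [gaussianPDF, mul_assoc, ← exp_add, hA_v]
    gcongr
    nlinarith [hv.out]
  have hKA :
      K * √((2 * π) ^ Fintype.card ι / A.det) = exp (t * c) / √(1 + (2 * t) • P).det := by
    have hPA : P * A = 1 + (2 * t) • P := by
      rw [mul_add, mul_nonsing_inv _ hP.det_pos.ne'.isUnit, Matrix.mul_smul, mul_one]
    rw [hK, ← hPA, det_mul, sqrt_mul hP.det_pos.le, sqrt_mul (by positivity),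
      sqrt_div' _ hA.det_pos.le]
    have := hA.det_pos
    field_simp
  have hS : MeasurableSet {v : ι → ℝ | ∑ k, v k ^ 2 ≤ c} :=
    measurableSet_le (by fun_prop) measurable_const
  rw [withDensity_apply _ hS]
  calc ∫⁻ v in {v | ∑ k, v k ^ 2 ≤ c}, ENNReal.ofReal (gaussianPDF P v)
      ≤ ∫⁻ v in {v | ∑ k, v k ^ 2 ≤ c}, ENNReal.ofReal (K * exp (-(1 / 2) * (v ⬝ᵥ A *ᵥ v))) :=
        setLIntegral_mono' hS fun v hv => ENNReal.ofReal_le_ofReal (hdom v hv)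
    _ ≤ ∫⁻ v, ENNReal.ofReal (K * exp (-(1 / 2) * (v ⬝ᵥ A *ᵥ v))) :=
        setLIntegral_le_lintegral _ _
    _ = ENNReal.ofReal (K * ∫ v, exp (-(1 / 2) * (v ⬝ᵥ A *ᵥ v))) := by
        rw [← integral_const_mul, ofReal_integral_eq_lintegral_ofReal
          ((integrable_exp_neg_half_dotProduct_mulVec hA).const_mul K)
          (ae_of_all _ fun v => by positivity)]
    _ = ENNReal.ofReal (exp (t * c) / √(1 + (2 * t) • P).det) := by
        rw [integral_exp_neg_half_dotProduct_mulVec hA, hKA]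

lemma withDensity_gaussianPDF_sum_sq_le_le_exp {P : Matrix ι ι ℝ} (hP : P.PosDef) {t : ℝ}
    (ht : 0 ≤ t) (c : ℝ) :
    volume.withDensity (fun v => ENNReal.ofReal (gaussianPDF P v)) {v | ∑ k, v k ^ 2 ≤ c} ≤
      ENNReal.ofReal
        (exp (t * c - t * P.trace + t ^ 2 * ∑ i, hP.isHermitian.eigenvalues i ^ 2)) := by
  refine (withDensity_gaussianPDF_sum_sq_le_le_div_sqrt_det hP ht c).trans
    (ENNReal.ofReal_le_ofReal ?_)
  have hdet : exp (t * P.trace - t ^ 2 * ∑ i, hP.isHermitian.eigenvalues i ^ 2) ≤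
      √(1 + (2 * t) • P).det := by
    rw [← mul_div_cancel_left₀ (t * P.trace - _) two_ne_zero, exp_half]
    refine sqrt_le_sqrt (le_of_eq_of_le ?_
      (hP.posSemidef.exp_le_det_one_add_smul (s := 2 * t) (by positivity)))
    ring_nf
  calc exp (t * c) / √(1 + (2 * t) • P).det
      ≤ exp (t * c) / exp (t * P.trace - t ^ 2 * ∑ i, hP.isHermitian.eigenvalues i ^ 2) :=
        div_le_div_of_nonneg_left (exp_pos _).le (exp_pos _) hdet
    _ = _ := by rw [← exp_sub]; ring_nf

end GaussianTail

noncomputable def shiftMatrix (N M : ℕ) (a : Fin N → ℝ) : Matrix (Fin M) (Fin (N + M)) ℝ :=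
  fun k t => if h : k.1 ≤ t.1 ∧ t.1 - k.1 < N then a ⟨t.1 - k.1, h.2⟩ else 0

section Toeplitz

variable {N M : ℕ} (a : Fin N → ℝ)

lemma sum_shiftMatrix_mul_shiftMatrix_of_le {i j : Fin M} (hij : i ≤ j) :
    ∑ t, shiftMatrix N M a i t * shiftMatrix N M a j t = autocorr N a (j - i) := by
  refine (Fintype.sum_of_injective (fun s : Fin N => (⟨j + s, by omega⟩ : Fin (N + M)))
    (fun s s' h => Fin.ext (by simpa using h)) _ _ (fun t ht => ?_) (fun s => ?_)).symm
  · have : ¬(j.1 ≤ t.1 ∧ t.1 - j.1 < N) := fun h => ht ⟨⟨t - j, h.2⟩, by ext; simp; omega⟩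
    simp [shiftMatrix, this]
  · have hi : (i : ℕ) ≤ j + s := by omega
    simp [shiftMatrix, hi, show (j + s - i : ℕ) = s + (j - i) by omega, mul_comm]

lemma covToeplitz_eq_shiftMatrix_mul_transpose :
    covToeplitz N M a = shiftMatrix N M a * (shiftMatrix N M a)ᵀ := by
  ext i j
  simp only [covToeplitz, mul_apply, transpose_apply]
  rcases le_total i j with hij | hij
  · rw [sum_shiftMatrix_mul_shiftMatrix_of_le a hij, Nat.dist_eq_sub_of_le hij]
  · simp_rw [mul_comm (shiftMatrix N M a i _)]
    rw [sum_shiftMatrix_mul_shiftMatrix_of_le a hij, Nat.dist_eq_sub_of_le_right hij]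

lemma vecMul_shiftMatrix_injective (ha : a ≠ 0) :
    Function.Injective (shiftMatrix N M a).vecMul := by
  obtain ⟨i, hi⟩ := Function.ne_iff.1 ha
  obtain ⟨i₀, hi₀, hmin⟩ := WellFounded.has_min wellFounded_lt {i | a i ≠ 0} ⟨i, hi⟩
  set T : Matrix (Fin M) (Fin M) ℝ := fun k j => shiftMatrix N M a k ⟨j + i₀, by omega⟩
  have hT : T.IsUpperTriangular := fun k j hjk => by
    simp only [T, shiftMatrix]
    split_ifs with h
    · by_contra hne
      exact hmin ⟨_, h.2⟩ hne (Fin.mk_lt_mk.2 (by simp at hjk; omega))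
    · rfl
  have hdet : T.det ≠ 0 := by
    rw [det_of_isUpperTriangular hT]
    refine prod_ne_zero_iff.2 fun k _ => ?_
    simpa [T, shiftMatrix] using hi₀
  intro x y hxy
  refine sub_eq_zero.1 (eq_zero_of_vecMul_eq_zero hdet (funext fun j => ?_))
  simpa [T, vecMul, dotProduct, sub_mul, sub_eq_zero] using congrFun hxy ⟨j + i₀, by omega⟩

lemma posDef_covToeplitz (ha : a ≠ 0) : (covToeplitz N M a).PosDef := by
  simpa [covToeplitz_eq_shiftMatrix_mul_transpose] using
    PosDef.mul_conjTranspose_self _ (vecMul_shiftMatrix_injective a ha)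

lemma trace_covToeplitz : (covToeplitz N M a).trace = M * ∑ i, a i ^ 2 := by
  simp [trace, covToeplitz, autocorr, sq]

end Toeplitz

lemma neg_mul_add_sq_mul_at_vertex_le {X S : ℝ} (hS : 0 ≤ S) :
    -(X / (2 * S) * X) + (X / (2 * S)) ^ 2 * S ≤ -(X ^ 2 / (8 * S)) := by
  rcases hS.eq_or_lt with rfl | hS
  · simp
  · have : -(X / (2 * S) * X) + (X / (2 * S)) ^ 2 * S = -(2 * (X ^ 2 / (8 * S))) := by
      field_simp; ring
    rw [this]
    nlinarith [div_nonneg (sq_nonneg X) (by positivity : (0:ℝ) ≤ 8 * S)]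

theorem gaussian_toeplitz_lower_tail_general (N M : ℕ)
    (a : Fin N → ℝ) (ha : a ≠ 0)
    (hP : (covToeplitz N M a).IsHermitian)
    (ν : Measure (Fin M → ℝ))
    (hν : ν = volume.withDensity (fun v => ENNReal.ofReal
      ((Real.sqrt ((2 * π) ^ M * (covToeplitz N M a).det))⁻¹ *
        Real.exp (-(1 / 2) * (v ⬝ᵥ (covToeplitz N M a)⁻¹ *ᵥ v))))) :
    ∀ ε ∈ Set.Ioo (0 : ℝ) 1,
      ν {v | ∑ k, (v k) ^ 2 ≤ M * (∑ i, (a i) ^ 2) * (1 - ε)} ≤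
        ENNReal.ofReal (Real.exp (-(ε ^ 2 * M) /
          (8 * ((∑ i, (hP.eigenvalues i) ^ 2) / (M * (∑ i, (a i) ^ 2) ^ 2))))) := by
  rintro ε ⟨hε, -⟩
  have hν' :
      ν = volume.withDensity (fun v => ENNReal.ofReal (gaussianPDF (covToeplitz N M a) v)) := by
    simp only [hν, gaussianPDF, Fintype.card_fin]
  rw [hν']
  set S := ∑ i, hP.eigenvalues i ^ 2
  set X := ε * M * ∑ i, a i ^ 2
  refine (withDensity_gaussianPDF_sum_sq_le_le_exp (posDef_covToeplitz a ha) (t := X / (2 * S))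
    (by positivity) _).trans (ENNReal.ofReal_le_ofReal (exp_le_exp.2 ?_))
  calc _ = -(X / (2 * S) * X) + (X / (2 * S)) ^ 2 * S := by rw [trace_covToeplitz]; ring
    _ ≤ -(X ^ 2 / (8 * S)) := neg_mul_add_sq_mul_at_vertex_le (by positivity)
    _ = _ := by rw [mul_div_assoc', div_div_eq_mul_div]; ring

theorem gaussian_toeplitz_lower_tail (N M : ℕ) (hN : 1 ≤ N) (hM : 1 ≤ M)
    (a : Fin N → ℝ) (ha : a ≠ 0)
    (hP : (covToeplitz N M a).IsHermitian)
    (ν : Measure (Fin M → ℝ))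
    (hν : ν = volume.withDensity (fun v => ENNReal.ofReal
      ((Real.sqrt ((2 * π) ^ M * (covToeplitz N M a).det))⁻¹ *
        Real.exp (-(1 / 2) * (v ⬝ᵥ (covToeplitz N M a)⁻¹ *ᵥ v))))) :
    ∀ ε ∈ Set.Ioo (0 : ℝ) 1,
      ν {v | ∑ k, (v k) ^ 2 ≤ M * (∑ i, (a i) ^ 2) * (1 - ε)} ≤
        ENNReal.ofReal (Real.exp (-(ε ^ 2 * M) /
          (8 * ((∑ i, (hP.eigenvalues i) ^ 2) / (M * (∑ i, (a i) ^ 2) ^ 2))))) :=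
  gaussian_toeplitz_lower_tail_general N M a ha hP ν hν
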